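/- arXiv:2306.16025 — 7 statements merged into one kernel-verified Lean document; each statement's English description precedes it below -/
import Mathlib

section
/- Let k ≥ 2 be an integer and A ⊆ ℕ. Then R_{1,k}(A,n) = R_{1,k}(ℕ\A,n) holds for all integers n ≥ n₀ if and only if both: (a) for all n with n₀ ≤ n < k + n₀, the number of pairs (a₁,a₂) of nonnegative integers with a₁ + k·a₂ = n equals the sum over such pairs of χ(a₁) plus the sum over such pairs of χ(a₂), where χ is the characteristic function of A; and (b) for all n ≥ k + n₀, χ(n) + χ(⌊n/k⌋) = 1. -/
noncomputable def R (k : ℕ) (A : Set ℕ) (n : ℕ) : ℕ :=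
  Set.ncard {p : ℕ × ℕ | p.1 ∈ A ∧ p.2 ∈ A ∧ p.1 + k * p.2 = n}

open Classical in
noncomputable def chi (A : Set ℕ) (t : ℕ) : ℕ := if t ∈ A then 1 else 0

open scoped Classical
open Finset

private def TT (k n : ℕ) : Finset (ℕ × ℕ) :=
  (Finset.range (n + 1) ×ˢ Finset.range (n + 1)).filter (fun p => p.1 + k * p.2 = n)

private lemma mem_TT {k n : ℕ} (hk : 1 ≤ k) {p : ℕ × ℕ} :
    p ∈ TT k n ↔ p.1 + k * p.2 = n := by
  constructor
  · intro h; exact (Finset.mem_filter.mp h).2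
  · intro h
    refine Finset.mem_filter.mpr ⟨Finset.mem_product.mpr ⟨?_, ?_⟩, h⟩ <;>
      simp only [Finset.mem_range] <;> nlinarith

private lemma R_eq_card {k n : ℕ} (hk : 1 ≤ k) (A : Set ℕ) :
    R k A n = ((TT k n).filter (fun p => p.1 ∈ A ∧ p.2 ∈ A)).card := by
  rw [R, ← Set.ncard_coe_finset]
  congr 1
  ext p
  simp only [Set.mem_setOf_eq, Finset.coe_filter, mem_TT hk]
  tauto

private lemma sum_TT {k n : ℕ} (hk : 1 ≤ k) {M : Type*} [AddCommMonoid M] (g : ℕ × ℕ → M) :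
    ∑ p ∈ TT k n, g p = ∑ j ∈ Finset.range (n / k + 1), g (n - k * j, j) := by
  have hk0 : 0 < k := hk
  refine Finset.sum_nbij' (fun p => p.2) (fun j => (n - k * j, j)) ?_ ?_ ?_ ?_ ?_
  · intro p hp
    rw [mem_TT hk] at hp
    rw [Finset.mem_range, Nat.lt_succ_iff, Nat.le_div_iff_mul_le hk0]
    nlinarith
  · intro j hj
    rw [Finset.mem_range, Nat.lt_succ_iff, Nat.le_div_iff_mul_le hk0] at hj
    have hkj : k * j ≤ n := by nlinarith
    rw [mem_TT hk]
    show n - k * j + k * j = n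
    omega
  · intro p hp
    rw [mem_TT hk] at hp
    have : p.1 = n - k * p.2 := by omega
    exact Prod.ext this.symm rfl
  · intro j hj; rfl
  · intro p hp
    rw [mem_TT hk] at hp
    have : p.1 = n - k * p.2 := by omega
    rw [← this]

private lemma card_TT {k n : ℕ} (hk : 1 ≤ k) : (TT k n).card = n / k + 1 := by
  rw [Finset.card_eq_sum_ones, sum_TT hk, Finset.sum_const, Finset.card_range, smul_eq_mul,
    mul_one]

private lemma chi_compl (A : Set ℕ) (t : ℕ) : (chi Aᶜ t : ℤ) = 1 - chi A t := by
  by_cases h : t ∈ A <;> simp [chi, h]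

private lemma chi_mul (A : Set ℕ) (p : ℕ × ℕ) :
    chi A p.1 * chi A p.2 = if p.1 ∈ A ∧ p.2 ∈ A then 1 else 0 := by
  by_cases h1 : p.1 ∈ A <;> by_cases h2 : p.2 ∈ A <;> simp [chi, h1, h2]

/-- Condition Q n -/
private lemma R_iff {k n : ℕ} (hk : 1 ≤ k) (A : Set ℕ) :
    R k A n = R k Aᶜ n ↔
      (TT k n).card = (∑ p ∈ TT k n, chi A p.1) + ∑ p ∈ TT k n, chi A p.2 := by
  have hB : R k A n = ∑ p ∈ TT k n, chi A p.1 * chi A p.2 := by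
    rw [R_eq_card hk A, Finset.card_filter]
    refine Finset.sum_congr rfl fun p _ => ?_
    by_cases h1 : p.1 ∈ A <;> by_cases h2 : p.2 ∈ A <;> simp [chi, h1, h2]
  have hN : R k Aᶜ n = ∑ p ∈ TT k n, chi Aᶜ p.1 * chi Aᶜ p.2 := by
    rw [R_eq_card hk Aᶜ, Finset.card_filter]
    refine Finset.sum_congr rfl fun p _ => ?_
    by_cases h1 : p.1 ∈ Aᶜ <;> by_cases h2 : p.2 ∈ Aᶜ <;> simp [chi, h1, h2]
  have key : (R k A n : ℤ) + (TT k n).card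
      = (R k Aᶜ n : ℤ)
        + (((∑ p ∈ TT k n, chi A p.1 : ℕ) : ℤ) + ((∑ p ∈ TT k n, chi A p.2 : ℕ) : ℤ)) := by
    rw [hB, hN, Finset.card_eq_sum_ones]
    push_cast
    rw [← Finset.sum_add_distrib, ← Finset.sum_add_distrib, ← Finset.sum_add_distrib]
    refine Finset.sum_congr rfl fun p _ => ?_
    rw [chi_compl, chi_compl]
    ring
  constructor <;> intro h <;> omega

private lemma sum_rec {k n : ℕ} (hk : 1 ≤ k) (hn : k ≤ n) (A : Set ℕ) :
    (∑ p ∈ TT k n, chi A p.1) + ∑ p ∈ TT k n, chi A p.2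
      = ((∑ p ∈ TT k (n - k), chi A p.1) + ∑ p ∈ TT k (n - k), chi A p.2)
        + (chi A n + chi A (n / k)) := by
  have hk0 : 0 < k := hk
  have hdiv : n / k = (n - k) / k + 1 := Nat.div_eq_sub_div hk0 hn
  rw [sum_TT hk, sum_TT hk, sum_TT hk, sum_TT hk, hdiv]
  set m := (n - k) / k with hm
  have h1 : ∑ j ∈ Finset.range (m + 1 + 1), chi A (n - k * j)
      = chi A n + ∑ j ∈ Finset.range (m + 1), chi A (n - k - k * j) := by
    rw [Finset.sum_range_succ' (fun j => chi A (n - k * j)) (m + 1)]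
    simp only [Nat.mul_zero, Nat.sub_zero]
    rw [add_comm]
    congr 1
    refine Finset.sum_congr rfl fun j _ => ?_
    congr 1
    have : k * (j + 1) = k * j + k := by ring
    omega
  have h2 : ∑ j ∈ Finset.range (m + 1 + 1), chi A j
      = (∑ j ∈ Finset.range (m + 1), chi A j) + chi A (m + 1) := by
    rw [Finset.sum_range_succ]
  rw [h1, h2]
  ring


theorem stmt_0 (k n₀ : ℕ) (hk : 2 ≤ k) (A : Set ℕ) :
    (∀ n, n₀ ≤ n → R k A n = R k Aᶜ n) ↔
      ((∀ n, n₀ ≤ n → n < k + n₀ →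
          ((Finset.range (n + 1) ×ˢ Finset.range (n + 1)).filter
              (fun p => p.1 + k * p.2 = n)).card =
            (∑ p ∈ (Finset.range (n + 1) ×ˢ Finset.range (n + 1)).filter
                (fun p => p.1 + k * p.2 = n), chi A p.1) +
            ∑ p ∈ (Finset.range (n + 1) ×ˢ Finset.range (n + 1)).filter
                (fun p => p.1 + k * p.2 = n), chi A p.2) ∧
        (∀ n, k + n₀ ≤ n → chi A n + chi A (n / k) = 1)) := by
  have hk1 : 1 ≤ k := by omega
  have hTT : ∀ n : ℕ, (Finset.range (n + 1) ×ˢ Finset.range (n + 1)).filter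
      (fun p => p.1 + k * p.2 = n) = TT k n := fun n => rfl
  constructor
  · intro h
    constructor
    · intro n hn _
      rw [hTT]
      exact (R_iff hk1 A).mp (h n hn)
    · intro n hn
      have h1 := (R_iff hk1 A).mp (h n (by omega))
      have h2 := (R_iff hk1 A).mp (h (n - k) (by omega))
      have hrec := sum_rec hk1 (by omega : k ≤ n) A
      have hcard : (TT k n).card = (TT k (n - k)).card + 1 := by
        rw [card_TT hk1, card_TT hk1, Nat.div_eq_sub_div (by omega) (by omega)]
      omega
  · rintro ⟨ha, hb⟩
    have key : ∀ n, n₀ ≤ n →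
        (TT k n).card = (∑ p ∈ TT k n, chi A p.1) + ∑ p ∈ TT k n, chi A p.2 := by
      intro n
      induction n using Nat.strong_induction_on with
      | _ n ih =>
        intro hn
        by_cases hcase : n < k + n₀
        · have := ha n hn hcase
          rwa [hTT] at this
        · have h2 := ih (n - k) (by omega) (by omega)
          have hb' := hb n (by omega)
          have hrec := sum_rec hk1 (by omega : k ≤ n) A
          have hcard : (TT k n).card = (TT k (n - k)).card + 1 := by
            rw [card_TT hk1, card_TT hk1, Nat.div_eq_sub_div (by omega) (by omega)]
          omega
    intro n hn
    rw [R_iff hk1]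
    exact key n hn
end

section
/- Let k ≥ 2 be an integer, A ⊆ ℕ, and suppose χ(n) + χ(⌊n/k⌋) = 1 for all n ≥ k + n₀ (where χ is the characteristic function of A). Then for every n ≥ ⌊(n₀+k)/k⌋ + 1 and every positive integer i: if i is odd, then χ(n) + χ(kⁱn + j) = 1 for all j with 0 ≤ j ≤ kⁱ − 1; and if i is even, then χ(n) = χ(kⁱn + j) for all j with 0 ≤ j ≤ kⁱ − 1. -/
theorem stmt_1 (k n₀ : ℕ) (hk : 2 ≤ k) (A : Set ℕ)
    (h : ∀ n, k + n₀ ≤ n → chi A n + chi A (n / k) = 1) :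
    ∀ n, (n₀ + k) / k + 1 ≤ n → ∀ i, 1 ≤ i →
      (Odd i → ∀ j, j ≤ k ^ i - 1 → chi A n + chi A (k ^ i * n + j) = 1) ∧
      (Even i → ∀ j, j ≤ k ^ i - 1 → chi A n = chi A (k ^ i * n + j)) := by
  have hk0 : 0 < k := by omega
  have key : ∀ m, (n₀ + k) / k + 1 ≤ m → ∀ r, r ≤ k - 1 →
      chi A m + chi A (k * m + r) = 1 := by
    intro m hm r hr
    have hd := Nat.div_add_mod (n₀ + k) k
    have hmod : (n₀ + k) % k < k := Nat.mod_lt _ hk0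
    have hmul : k * ((n₀ + k) / k + 1) ≤ k * m := Nat.mul_le_mul_left _ hm
    have h1 : k + n₀ ≤ k * m + r := by nlinarith [Nat.mul_add k ((n₀+k)/k) 1]
    have h2 : (k * m + r) / k = m := by
      rw [Nat.mul_add_div hk0, Nat.div_eq_of_lt (by omega)]
      omega
    have := h (k * m + r) h1
    rw [h2] at this
    omega
  intro n hn i hi
  induction i, hi using Nat.le_induction with
  | base =>
    refine ⟨fun _ j hj => ?_, fun he => absurd he (by simp)⟩
    have := key n hn j (by simpa using hj)
    simpa using this
  | succ i hi ih =>
    obtain ⟨ho, he⟩ := ih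
    have hpow : 0 < k ^ i := Nat.pow_pos hk0
    have hmn : (n₀ + k) / k + 1 ≤ k ^ i * n := le_trans hn (Nat.le_mul_of_pos_left n hpow)
    constructor
    · intro hodd j hj
      have hie : Even i := Nat.not_odd_iff_even.mp (Nat.odd_add_one.mp hodd)
      have hqr : k * (j / k) + j % k = j := Nat.div_add_mod j k
      have hjlt : j < k ^ (i + 1) := by
        have : 0 < k ^ (i+1) := Nat.pow_pos hk0
        omega
      have hq : j / k ≤ k ^ i - 1 := by
        have : j / k < k ^ i := Nat.div_lt_of_lt_mul (by rw [← pow_succ']; exact hjlt)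
        omega
      have hr : j % k ≤ k - 1 := by have := Nat.mod_lt j hk0; omega
      have hk2 := key (k ^ i * n + j / k) (le_trans hmn (Nat.le_add_right _ _)) _ hr
      have hch := he hie (j / k) hq
      have heq : k ^ (i+1) * n + j = k * (k ^ i * n + j / k) + j % k := by
        calc k ^ (i+1) * n + j = k * k ^ i * n + (k * (j / k) + j % k) := by
              rw [pow_succ', hqr]
          _ = k * (k ^ i * n + j / k) + j % k := by ring
      rw [heq]
      omega
    · intro heven j hj
      have hio : Odd i := Nat.not_even_iff_odd.mp (Nat.even_add_one.mp heven)
      have hqr : k * (j / k) + j % k = j := Nat.div_add_mod j k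
      have hjlt : j < k ^ (i + 1) := by
        have : 0 < k ^ (i+1) := Nat.pow_pos hk0
        omega
      have hq : j / k ≤ k ^ i - 1 := by
        have : j / k < k ^ i := Nat.div_lt_of_lt_mul (by rw [← pow_succ']; exact hjlt)
        omega
      have hr : j % k ≤ k - 1 := by have := Nat.mod_lt j hk0; omega
      have hk2 := key (k ^ i * n + j / k) (le_trans hmn (Nat.le_add_right _ _)) _ hr
      have hch := ho hio (j / k) hq
      have heq : k ^ (i+1) * n + j = k * (k ^ i * n + j / k) + j % k := by
        calc k ^ (i+1) * n + j = k * k ^ i * n + (k * (j / k) + j % k) := by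
              rw [pow_succ', hqr]
          _ = k * (k ^ i * n + j / k) + j % k := by ring
      rw [heq]
      omega
end

section
/- Let k ≥ 2 be an integer, A ⊆ ℕ, and suppose χ(n) + χ(⌊n/k⌋) = 1 for all n ≥ k + n₀. Then for every n ≥ ⌊(n₀+k)/k⌋ + 1 and every odd positive integer i, the interval of integers [kⁱn, kⁱn + kⁱ − 1] is entirely contained in A or entirely contained in ℕ\A, according as n ∉ A or n ∈ A. -/
lemma chi_cases (A : Set ℕ) (t : ℕ) : chi A t = 0 ∨ chi A t = 1 := by
  unfold chi; split <;> simp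

lemma chi_one (A : Set ℕ) (t : ℕ) (h : chi A t = 1) : t ∈ A := by
  unfold chi at h; by_contra hc; simp [hc] at h

lemma chi_zero (A : Set ℕ) (t : ℕ) (h : chi A t = 0) : t ∉ A := by
  unfold chi at h; intro hc; simp [hc] at h

lemma chi_aux (k n₀ : ℕ) (hk : 2 ≤ k) (A : Set ℕ)
    (h : ∀ n, k + n₀ ≤ n → chi A n + chi A (n / k) = 1)
    (n : ℕ) (hn : (n₀ + k) / k + 1 ≤ n) :
    ∀ i, ∀ m, k ^ i * n ≤ m → m ≤ k ^ i * n + k ^ i - 1 →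
      chi A m = if Odd i then 1 - chi A n else chi A n := by
  have hkpos : 0 < k := by omega
  have hkn : k + n₀ + 1 ≤ k * n := by
    have h1 : k * ((n₀ + k) / k) + (k - 1) ≥ n₀ + k := by
      have h2 := Nat.div_add_mod (n₀ + k) k
      have h3 : (n₀ + k) % k < k := Nat.mod_lt _ hkpos
      omega
    have h4 : k * ((n₀ + k) / k + 1) ≤ k * n := Nat.mul_le_mul_left k hn
    have h5 : k * ((n₀ + k) / k + 1) = k * ((n₀ + k) / k) + k := by ring
    omega
  intro i
  induction i with
  | zero =>
    intro m h1 h2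
    simp only [pow_zero, one_mul] at h1 h2
    have : m = n := by omega
    simp [this]
  | succ i ih =>
    intro m h1 h2
    have hpow : k ^ (i + 1) = k * k ^ i := by ring
    have hkipos : 0 < k ^ i := Nat.pow_pos hkpos
    -- m ≥ k + n₀
    have hm1 : k + n₀ ≤ m := by
      have : k * n ≤ k ^ (i + 1) * n := by
        apply Nat.mul_le_mul_right
        calc k = k ^ 1 := (pow_one k).symm
        _ ≤ k ^ (i + 1) := Nat.pow_le_pow_right (by omega) (by omega)
      omega
    -- bounds on m / k
    have hd1 : k ^ i * n ≤ m / k := by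
      rw [Nat.le_div_iff_mul_le hkpos]
      calc k ^ i * n * k = k ^ (i+1) * n := by ring
      _ ≤ m := h1
    have hd2 : m / k ≤ k ^ i * n + k ^ i - 1 := by
      have : m / k < k ^ i * n + k ^ i := by
        rw [Nat.div_lt_iff_lt_mul hkpos]
        have : (k ^ i * n + k ^ i) * k = k ^ (i+1) * n + k ^ (i+1) := by ring
        omega
      omega
    have hrec := ih (m / k) hd1 hd2
    have heq := h m hm1
    have hodd : Odd (i + 1) ↔ ¬ Odd i := Nat.odd_add_one
    rcases chi_cases A n with hc | hc <;>
    rcases Nat.even_or_odd i with he | he <;>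
      (first | simp [hc, hodd, Nat.not_odd_iff_even.mpr he] at hrec ⊢ | simp [hc, hodd, he] at hrec ⊢) <;>
      omega

theorem stmt_2 (k n₀ : ℕ) (hk : 2 ≤ k) (A : Set ℕ)
    (h : ∀ n, k + n₀ ≤ n → chi A n + chi A (n / k) = 1) :
    ∀ n, (n₀ + k) / k + 1 ≤ n → ∀ i, 1 ≤ i → Odd i →
      (n ∉ A → Set.Icc (k ^ i * n) (k ^ i * n + k ^ i - 1) ⊆ A) ∧
      (n ∈ A → Set.Icc (k ^ i * n) (k ^ i * n + k ^ i - 1) ⊆ Aᶜ) := by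
  intro n hn i hi hodd
  have key := chi_aux k n₀ hk A h n hn i
  constructor
  · intro hnA m hm
    rw [Set.mem_Icc] at hm
    have := key m hm.1 hm.2
    have hcn : chi A n = 0 := by unfold chi; simp [hnA]
    rw [if_pos hodd, hcn] at this
    exact chi_one A m this
  · intro hnA m hm
    rw [Set.mem_Icc] at hm
    have := key m hm.1 hm.2
    have hcn : chi A n = 1 := by unfold chi; simp [hnA]
    rw [if_pos hodd, hcn] at this
    exact chi_zero A m this
end

section
/- Let k ≥ 2 be an integer, A ⊆ ℕ, and suppose χ(n) + χ(⌊n/k⌋) = 1 for all n ≥ k + n₀. Then for every n ≥ ⌊(n₀+k)/k⌋ + 1 and every even positive integer i, the interval of integers [kⁱn, kⁱn + kⁱ − 1] is entirely contained in A if n ∈ A, and entirely contained in ℕ\A if n ∉ A. -/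
theorem stmt_3 (k n₀ : ℕ) (hk : 2 ≤ k) (A : Set ℕ)
    (h : ∀ n, k + n₀ ≤ n → chi A n + chi A (n / k) = 1) :
    ∀ n, (n₀ + k) / k + 1 ≤ n → ∀ i, 1 ≤ i → Even i →
      (n ∈ A → Set.Icc (k ^ i * n) (k ^ i * n + k ^ i - 1) ⊆ A) ∧
      (n ∉ A → Set.Icc (k ^ i * n) (k ^ i * n + k ^ i - 1) ⊆ Aᶜ) := by
  intro n hn i hi hie
  have hk0 : 0 < k := by omega
  have hkn : k + n₀ ≤ k * n := by
    have h1 := Nat.div_add_mod (n₀ + k) k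
    have h2 : (n₀ + k) % k < k := Nat.mod_lt _ hk0
    have h3 : k * ((n₀ + k) / k + 1) ≤ k * n := Nat.mul_le_mul_left k hn
    nlinarith
  have claim : ∀ j, ∀ m, k ^ j * n ≤ m → m ≤ k ^ j * n + k ^ j - 1 →
      (m ∈ A ↔ (Even j ↔ n ∈ A)) := by
    intro j
    induction j with
    | zero =>
      intro m h1 h2
      simp only [pow_zero, one_mul] at h1 h2
      have : m = n := by omega
      subst this
      simp
    | succ j ih =>
      intro m h1 h2
      have hkj : 0 < k ^ j := Nat.pow_pos hk0
      have hpow : k ^ (j + 1) = k ^ j * k := pow_succ k j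
      have hd1 : k ^ j * n ≤ m / k := by
        rw [Nat.le_div_iff_mul_le hk0]
        calc k ^ j * n * k = k ^ (j + 1) * n := by rw [hpow]; ring
        _ ≤ m := h1
      have hd2 : m / k ≤ k ^ j * n + k ^ j - 1 := by
        have hlt : m / k < k ^ j * n + k ^ j := by
          rw [Nat.div_lt_iff_lt_mul hk0]
          have he : (k ^ j * n + k ^ j) * k = k ^ (j + 1) * n + k ^ (j + 1) := by
            rw [hpow]; ring
          have hp : 0 < k ^ (j + 1) := Nat.pow_pos hk0
          omega
        omega
      have hm : k + n₀ ≤ m := by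
        have : k * n ≤ k ^ (j + 1) * n := by
          have : k ≤ k ^ (j + 1) := by
            calc k = k ^ 1 := (pow_one k).symm
            _ ≤ k ^ (j + 1) := Nat.pow_le_pow_right (by omega) (by omega)
          exact Nat.mul_le_mul_right n this
        omega
      have hflip := h m hm
      have hchi : (m ∈ A ↔ ¬ (m / k ∈ A)) := by
        by_cases ha : m ∈ A <;> by_cases hb : m / k ∈ A <;>
          simp [chi, ha, hb] at hflip ⊢
      have hih := ih (m / k) hd1 hd2
      rw [hchi, hih]
      rw [Nat.even_add_one]
      tauto
  constructor <;> intro hA m hm <;> obtain ⟨hm1, hm2⟩ := hm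
  · exact (claim i m hm1 hm2).mpr (by tauto)
  · have := claim i m hm1 hm2
    simp only [Set.mem_compl_iff]
    tauto
end

section
/- Let k ≥ 2 be an integer and A ⊆ ℕ such that R_{1,k}(A,n) = R_{1,k}(ℕ\A,n) for all integers n ≥ n₀. Then there exists a constant c > 0 (depending on k, n₀, A) and an integer N such that R_{1,k}(A,n) ≥ c·log n for all n ≥ N. -/
open Classical

lemma chi_le_one (A : Set ℕ) (t : ℕ) : chi A t ≤ 1 := by
  unfold chi; split <;> omega

lemma chi_eq_one_iff (A : Set ℕ) (t : ℕ) : chi A t = 1 ↔ t ∈ A := by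
  unfold chi; split <;> simp_all

lemma chi_eq_zero_iff (A : Set ℕ) (t : ℕ) : chi A t = 0 ↔ t ∉ A := by
  unfold chi; split <;> simp_all

open Classical in
lemma R_eq_sum (k : ℕ) (hk : 0 < k) (A : Set ℕ) (n : ℕ) :
    R k A n = ∑ b ∈ Finset.range (n / k + 1), chi A (n - k * b) * chi A b := by
  classical
  have hinj : Function.Injective (fun b : ℕ => (n - k * b, b)) := by
    intro a b hab
    exact congrArg Prod.snd hab
  have hset : {p : ℕ × ℕ | p.1 ∈ A ∧ p.2 ∈ A ∧ p.1 + k * p.2 = n}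
      = ↑(((Finset.range (n / k + 1)).filter
        (fun b => (n - k * b) ∈ A ∧ b ∈ A)).image (fun b => (n - k * b, b))) := by
    ext ⟨x, y⟩
    simp only [Set.mem_setOf_eq, Finset.coe_image, Set.mem_image, Finset.mem_coe,
      Finset.mem_filter, Finset.mem_range]
    constructor
    · rintro ⟨hx, hy, hxy⟩
      have hky : k * y ≤ n := by omega
      have hyq : y < n / k + 1 :=
        Nat.lt_succ_of_le ((Nat.le_div_iff_mul_le hk).2 (Nat.mul_comm k y ▸ hky))
      have hx' : n - k * y = x := by omega
      exact ⟨y, ⟨hyq, by rw [hx']; exact hx, hy⟩, by rw [hx']⟩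
    · rintro ⟨b, ⟨hbq, ha, hb⟩, heq⟩
      have hkb : k * b ≤ n := by
        have h1 : b ≤ n / k := by omega
        have h2 := (Nat.le_div_iff_mul_le hk).1 h1
        rw [Nat.mul_comm k b]; exact h2
      have h1 : n - k * b = x := congrArg Prod.fst heq
      have h2 : b = y := congrArg Prod.snd heq
      subst h1; subst h2
      exact ⟨ha, hb, by omega⟩
  rw [R, hset, Set.ncard_coe_finset, Finset.card_image_of_injective _ hinj,
    Finset.card_filter]
  refine Finset.sum_congr rfl fun b _ => ?_
  by_cases h1 : (n - k * b) ∈ A <;> by_cases h2 : b ∈ A <;> simp [chi, h1, h2]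

lemma chi_flip (k n₀ : ℕ) (hk : 2 ≤ k) (A : Set ℕ)
    (h : ∀ n, n₀ ≤ n → R k A n = R k Aᶜ n) :
    ∀ n, n₀ + k ≤ n → chi A n + chi A (n / k) = 1 := by
  have hk0 : 0 < k := by omega
  have hid : ∀ n, n₀ ≤ n →
      ∑ b ∈ Finset.range (n / k + 1), (chi A (n - k * b) + chi A b) = n / k + 1 := by
    intro n hn
    have h1 := R_eq_sum k hk0 A n
    have h2 := R_eq_sum k hk0 Aᶜ n
    have h3 := h n hn
    have hpt : ∀ x y : ℕ,
        chi Aᶜ x * chi Aᶜ y + (chi A x + chi A y) = chi A x * chi A y + 1 := by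
      intro x y
      by_cases hx : x ∈ A <;> by_cases hy : y ∈ A <;>
        simp [chi, hx, hy]
    have hsum : ∑ b ∈ Finset.range (n / k + 1),
          (chi Aᶜ (n - k * b) * chi Aᶜ b + (chi A (n - k * b) + chi A b))
        = ∑ b ∈ Finset.range (n / k + 1), (chi A (n - k * b) * chi A b + 1) :=
      Finset.sum_congr rfl fun b _ => hpt _ _
    have hr : ∑ b ∈ Finset.range (n / k + 1), (chi A (n - k * b) * chi A b + 1)
        = (∑ b ∈ Finset.range (n / k + 1), chi A (n - k * b) * chi A b) + (n / k + 1) := by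
      rw [Finset.sum_add_distrib, Finset.sum_const, Finset.card_range, smul_eq_mul, mul_one]
    have hl : ∑ b ∈ Finset.range (n / k + 1),
          (chi Aᶜ (n - k * b) * chi Aᶜ b + (chi A (n - k * b) + chi A b))
        = (∑ b ∈ Finset.range (n / k + 1), chi Aᶜ (n - k * b) * chi Aᶜ b)
          + ∑ b ∈ Finset.range (n / k + 1), (chi A (n - k * b) + chi A b) :=
      Finset.sum_add_distrib
    omega
  intro n hn
  have hq1 : 1 ≤ n / k := (Nat.one_le_div_iff hk0).2 (by omega)
  have e1 := hid n (by omega)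
  have e2 := hid (n - k) (by omega)
  obtain ⟨q, r, hqr, hrk⟩ : ∃ q r, n = k * q + r ∧ r < k :=
    ⟨n / k, n % k, by rw [Nat.div_add_mod], Nat.mod_lt n hk0⟩
  have hnq : n / k = q := by
    rw [hqr, Nat.mul_add_div hk0, Nat.div_eq_of_lt hrk]; omega

  have hq1' : 1 ≤ q := hnq ▸ hq1
  have hdiv : (n - k) / k = q - 1 := by
    have hnk : n - k = k * (q - 1) + r := by
      have : k * q = k * (q-1) + k := by
        have : q - 1 + 1 = q := by omega
        calc k * q = k * (q - 1 + 1) := by rw [this]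
        _ = k * (q-1) + k := by ring
      omega
    rw [hnk, Nat.mul_add_div hk0, Nat.div_eq_of_lt hrk]; omega
  rw [hnq] at e1 ⊢
  rw [hdiv] at e2
  have hsplit : ∑ b ∈ Finset.range (q + 1), (chi A (n - k * b) + chi A b)
      = ∑ b ∈ Finset.range (q + 1), chi A (n - k * b)
        + ∑ b ∈ Finset.range (q + 1), chi A b := Finset.sum_add_distrib
  have hsplit2 : ∑ b ∈ Finset.range (q - 1 + 1), (chi A (n - k - k * b) + chi A b)
      = ∑ b ∈ Finset.range (q - 1 + 1), chi A (n - k - k * b)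
        + ∑ b ∈ Finset.range (q - 1 + 1), chi A b := Finset.sum_add_distrib
  have hq2 : q - 1 + 1 = q := by omega
  rw [hsplit] at e1
  rw [hsplit2, hq2] at e2
  have hpeel1 : ∑ b ∈ Finset.range (q + 1), chi A (n - k * b)
      = (∑ b ∈ Finset.range q, chi A (n - k - k * b)) + chi A n := by
    rw [Finset.sum_range_succ' (fun b => chi A (n - k * b)) q]
    have harg : ∀ b : ℕ, n - k * (b + 1) = n - k - k * b := by
      intro b
      have : k * (b + 1) = k * b + k := by ring
      omega
    simp [harg]
  have hpeel2 : ∑ b ∈ Finset.range (q + 1), chi A b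
      = (∑ b ∈ Finset.range q, chi A b) + chi A q := Finset.sum_range_succ _ q
  rw [hpeel1, hpeel2] at e1
  omega
lemma ivt (A : Set ℕ) : ∀ y x : ℕ, x < y → chi A x ≠ chi A y →
    ∃ m, x < m ∧ m ≤ y ∧ chi A m ≠ chi A (m - 1) := by
  intro y
  induction y with
  | zero => intro x hx _; omega
  | succ y ih =>
    intro x hxy hne
    by_cases hc : chi A y = chi A (y + 1)
    · rcases Nat.lt_or_ge x y with h' | h'
      · obtain ⟨m, h1, h2, h3⟩ := ih x h' (by rw [hc]; exact hne)
        exact ⟨m, h1, by omega, h3⟩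
      · have hxeq : x = y := by omega
        subst hxeq
        exact absurd hc hne
    · refine ⟨y + 1, by omega, le_refl _, ?_⟩
      simpa using Ne.symm hc

section Structure

variable {k c : ℕ} {A : Set ℕ}

lemma change_dvd (hk : 2 ≤ k) (hc : 1 ≤ c)
    (flip : ∀ n, k ^ c ≤ n → chi A n + chi A (n / k) = 1) :
    ∀ e m, k ^ (e + c) < m → chi A m ≠ chi A (m - 1) → k ^ e ∣ m := by
  intro e
  induction e with
  | zero => intro m _ _; simpa using one_dvd m
  | succ e ih =>
    intro m hm hch
    have hkc2 : 2 ≤ k ^ c := le_trans hk (Nat.le_self_pow (by omega) k)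
    have hec : k ^ (e + 1 + c) = k * k ^ (e + c) := by
      rw [← pow_succ']; ring_nf
    have hecc : k ^ c ≤ k ^ (e + c) := Nat.pow_le_pow_right (by omega) (by omega)
    have hm1 : k ^ c ≤ m - 1 := by
      have h2 : 2 * k ^ (e + c) ≤ k * k ^ (e + c) := Nat.mul_le_mul_right _ hk
      omega
    have f1 := flip m (by omega)
    have f2 := flip (m - 1) (by omega)
    have c1 := chi_le_one A m
    have c2 := chi_le_one A (m - 1)
    have c3 := chi_le_one A (m / k)
    have c4 := chi_le_one A ((m - 1) / k)
    have hne : chi A (m / k) ≠ chi A ((m - 1) / k) := by omega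
    have hsd := Nat.succ_div (a := m - 1) (b := k)
    have hm0 : m - 1 + 1 = m := by omega
    rw [hm0] at hsd
    have hdvd : k ∣ m := by
      by_contra hd
      rw [if_neg hd] at hsd
      exact hne (by rw [hsd, Nat.add_zero])
    rw [if_pos hdvd] at hsd
    have hch' : chi A (m / k) ≠ chi A (m / k - 1) := by
      have h' : m / k - 1 = (m - 1) / k := by rw [hsd]; simp
      rw [h']; exact hne
    obtain ⟨t, rfl⟩ := hdvd
    have hkpos : 0 < k := by omega
    have htq : k * t / k = t := Nat.mul_div_cancel_left t hkpos
    rw [htq] at hch'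
    have hmt : k ^ (e + c) < t := by
      rw [hec] at hm
      exact lt_of_mul_lt_mul_left hm (Nat.zero_le k)
    have := ih t hmt hch'
    rw [pow_succ']
    exact mul_dvd_mul_left k this

end Structure
lemma quot_rel (hk : 2 ≤ k) (hc : 1 ≤ c)
    (flip : ∀ n, k ^ c ≤ n → chi A n + chi A (n / k) = 1) :
    ∀ j x y, k ^ c ≤ x / k ^ j → k ^ c ≤ y / k ^ j →
      (chi A x = chi A y ↔ chi A (x / k ^ j) = chi A (y / k ^ j)) := by
  intro j
  induction j with
  | zero => intro x y _ _; simp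
  | succ j ih =>
    intro x y hx hy
    have hxe : (x / k) / k ^ j = x / k ^ (j + 1) := by
      rw [Nat.div_div_eq_div_mul, ← pow_succ']
    have hye : (y / k) / k ^ j = y / k ^ (j + 1) := by
      rw [Nat.div_div_eq_div_mul, ← pow_succ']
    have hxk : k ^ c ≤ x := le_trans hx (Nat.div_le_self _ _)
    have hyk : k ^ c ≤ y := le_trans hy (Nat.div_le_self _ _)
    have f1 := flip x hxk
    have f2 := flip y hyk
    have c1 := chi_le_one A x
    have c2 := chi_le_one A y
    have c3 := chi_le_one A (x / k)
    have c4 := chi_le_one A (y / k)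
    have step : chi A x = chi A y ↔ chi A (x / k) = chi A (y / k) := by
      constructor <;> intro <;> omega
    have ihh := ih (x / k) (y / k) (by rw [hxe]; exact hx) (by rw [hye]; exact hy)
    rw [step, ihh, hxe, hye]

lemma exists_u (hk : 2 ≤ k) (hc : 1 ≤ c)
    (flip : ∀ n, k ^ c ≤ n → chi A n + chi A (n / k) = 1)
    (Q : ℕ) (hQ : k ^ (2 * c + 7) ≤ Q) :
    ∃ u, k ^ c ≤ u ∧ u < k ^ (c + 5) ∧ chi A u ≠ chi A (Q - u) := by
  by_contra hcon
  push_neg at hcon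
  have hk1 : 1 < k := by omega
  -- power comparison facts
  have mono : ∀ a b : ℕ, a ≤ b → k ^ a ≤ k ^ b := fun a b hab => Nat.pow_le_pow_right (by omega) hab
  have smono : ∀ a b : ℕ, a < b → k ^ a < k ^ b := fun a b hab => Nat.pow_lt_pow_right hk1 hab
  have hdouble : ∀ a : ℕ, 2 * k ^ a ≤ k ^ (a + 1) := by
    intro a
    have : k ^ (a + 1) = k ^ a * k := pow_succ k a
    have h2 : k ^ a * 2 ≤ k ^ a * k := Nat.mul_le_mul_left _ hk
    omega
  -- flips at powers
  have hEf : ∀ a : ℕ, c ≤ a → chi A (k ^ (a + 1)) ≠ chi A (k ^ a) := by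
    intro a ha
    have hfl := flip (k ^ (a + 1)) (mono _ _ (by omega))
    have hdv : k ^ (a + 1) / k = k ^ a := by
      rw [pow_succ]
      exact Nat.mul_div_cancel _ (by omega)
    rw [hdv] at hfl
    have := chi_le_one A (k ^ (a + 1))
    have := chi_le_one A (k ^ a)
    omega
  have h01 : chi A (k ^ (c + 1)) ≠ chi A (k ^ c) := hEf c (le_refl c)
  have h23 : chi A (k ^ (c + 3)) ≠ chi A (k ^ (c + 2)) := hEf (c + 2) (by omega)
  -- instantiate failure
  have i0 := hcon (k ^ c) (le_refl _) (smono _ _ (by omega))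
  have i1 := hcon (k ^ (c + 1)) (mono _ _ (by omega)) (smono _ _ (by omega))
  have i2 := hcon (k ^ (c + 2)) (mono _ _ (by omega)) (smono _ _ (by omega))
  have i3 := hcon (k ^ (c + 3)) (mono _ _ (by omega)) (smono _ _ (by omega))
  -- bounds on Q
  have hb0 : k ^ c < k ^ (c + 1) := smono _ _ (by omega)
  have hb1 : k ^ (c + 1) < k ^ (c + 2) := smono _ _ (by omega)
  have hb2 : k ^ (c + 2) < k ^ (c + 3) := smono _ _ (by omega)
  have hb3 : k ^ (c + 3) ≤ k ^ (2 * c + 7) := mono _ _ (by omega)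
  -- changes
  have hch1 : chi A (Q - k ^ (c + 1)) ≠ chi A (Q - k ^ c) := by
    rw [← i1, ← i0]; exact h01
  have hch2 : chi A (Q - k ^ (c + 3)) ≠ chi A (Q - k ^ (c + 2)) := by
    rw [← i3, ← i2]; exact h23
  obtain ⟨M₁, hM11, hM12, hM13⟩ := ivt A (Q - k ^ c) (Q - k ^ (c + 1)) (by omega) hch1
  obtain ⟨M₂, hM21, hM22, hM23⟩ := ivt A (Q - k ^ (c + 2)) (Q - k ^ (c + 3)) (by omega) hch2
  -- divisibility
  have hq24 : k ^ (2 * c + 4) = k ^ ((c + 4) + c) := by ring_nf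
  have hbig : k ^ (2 * c + 4) + k ^ (c + 3) ≤ k ^ (2 * c + 7) := by
    have e1 : k ^ (2 * c + 4) ≤ k ^ (2 * c + 6) := mono _ _ (by omega)
    have e2 : k ^ (c + 3) ≤ k ^ (2 * c + 6) := mono _ _ (by omega)
    have e3 : 2 * k ^ (2 * c + 6) ≤ k ^ (2 * c + 7) := hdouble _
    omega
  have hd1 : k ^ (c + 4) ∣ M₁ := by
    apply change_dvd hk hc flip (c + 4) M₁ _ hM13
    rw [← hq24]; omega
  have hd2 : k ^ (c + 4) ∣ M₂ := by
    apply change_dvd hk hc flip (c + 4) M₂ _ hM23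
    rw [← hq24]; omega
  have hdd : k ^ (c + 4) ∣ M₁ - M₂ := Nat.dvd_sub hd1 hd2
  have hpos : 0 < M₁ - M₂ := by omega
  have hle := Nat.le_of_dvd hpos hdd
  have hsmall : M₁ - M₂ < k ^ (c + 4) := by
    have e4 : k ^ (c + 3) < k ^ (c + 4) := smono _ _ (by omega)
    omega
  omega
lemma main_count (hk : 2 ≤ k) (hc : 1 ≤ c)
    (flip : ∀ n, k ^ c ≤ n → chi A n + chi A (n / k) = 1)
    (T n : ℕ) (hn : k ^ (5 * T + 2 * c + 8) ≤ n) : T ≤ R k A n := by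
  classical
  have hk1 : 1 < k := by omega
  have hk0 : 0 < k := by omega
  have mono : ∀ a b : ℕ, a ≤ b → k ^ a ≤ k ^ b :=
    fun a b hab => Nat.pow_le_pow_right (by omega) hab
  have smono : ∀ a b : ℕ, a < b → k ^ a < k ^ b :=
    fun a b hab => Nat.pow_lt_pow_right hk1 hab
  have hdouble : ∀ a : ℕ, 2 * k ^ a ≤ k ^ (a + 1) := by
    intro a
    have h1 : k ^ (a + 1) = k ^ a * k := pow_succ k a
    have h2 : k ^ a * 2 ≤ k ^ a * k := Nat.mul_le_mul_left _ hk
    omega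
  set q := n / k with hqdef
  have hq : k ^ (5 * T + 2 * c + 7) ≤ q := by
    rw [hqdef, Nat.le_div_iff_mul_le hk0]
    calc k ^ (5 * T + 2 * c + 7) * k = k ^ (5 * T + 2 * c + 8) := by rw [← pow_succ]
    _ ≤ n := hn
  have hkqn : k * q ≤ n := by
    rw [hqdef, Nat.mul_comm]
    exact Nat.div_mul_le_self n k
  have hex : ∀ j, j < T → ∃ b : ℕ,
      b ∈ A ∧ (n - k * b) ∈ A ∧ k * b ≤ n ∧
      k ^ (5 * j + c) ≤ min b (q - b) ∧ min b (q - b) < k ^ (5 * j + c + 5) := by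
    intro j hj
    have hppos : 0 < k ^ (5 * j) := pow_pos hk0 _
    set Q := q / k ^ (5 * j) with hQdef
    have hQbig : k ^ (2 * c + 7) ≤ Q := by
      have h1 : k ^ (5 * T + 2 * c + 7) / k ^ (5 * j) ≤ q / k ^ (5 * j) :=
        Nat.div_le_div_right hq
      have h2 : k ^ (5 * T + 2 * c + 7) / k ^ (5 * j) = k ^ (5 * T + 2 * c + 7 - 5 * j) :=
        Nat.pow_div (by omega) hk0
      have h3 : k ^ (2 * c + 7) ≤ k ^ (5 * T + 2 * c + 7 - 5 * j) := mono _ _ (by omega)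
      omega
    obtain ⟨u, hu1, hu2, hu3⟩ := exists_u hk hc flip Q hQbig
    set s := k ^ (5 * j) * u with hsdef
    have hs_u : s / k ^ (5 * j) = u := by
      rw [hsdef]; exact Nat.mul_div_cancel_left u hppos
    have hx1 : k ^ (5 * j) * k ^ (c + 5) = k ^ (5 * j + c + 5) := by
      rw [← pow_add]; ring_nf
    have hx2 : k ^ (5 * j) * k ^ c = k ^ (5 * j + c) := by rw [← pow_add]
    have hsx : s < k ^ (5 * j + c + 5) := by
      rw [hsdef, ← hx1]
      exact (mul_lt_mul_iff_right₀ hppos).2 hu2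
    have hsl : k ^ (5 * j + c) ≤ s := by
      rw [hsdef, ← hx2]
      exact Nat.mul_le_mul_left _ hu1
    have hkiQ : k ^ (5 * j) * Q ≤ q := by
      rw [hQdef, Nat.mul_comm]
      exact Nat.div_mul_le_self q _
    have hQ2 : k ^ (c + 5) * 2 ≤ Q := by
      have e1 : 2 * k ^ (c + 5) ≤ k ^ (c + 6) := hdouble _
      have e2 : k ^ (c + 6) ≤ k ^ (2 * c + 7) := mono _ _ (by omega)
      omega
    have h6 : k ^ (5 * j) * u ≤ k ^ (5 * j) * k ^ (c + 5) :=
      Nat.mul_le_mul_left _ (le_of_lt hu2)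
    have h7 : k ^ (5 * j) * (k ^ (c + 5) * 2) ≤ k ^ (5 * j) * Q :=
      Nat.mul_le_mul_left _ hQ2
    have h8 : k ^ (5 * j) * (k ^ (c + 5) * 2) = (k ^ (5 * j) * k ^ (c + 5)) * 2 := by ring
    have hsq : s ≤ q := by omega
    set t := q - s with htdef
    have hstt : s < t := by omega
    have hts : t / k ^ (5 * j) = Q - u := by
      rw [htdef, hQdef, hsdef]
      exact Nat.sub_mul_div q (k ^ (5 * j)) u
    have hQu : k ^ c ≤ Q - u := by
      have e3 : k ^ c ≤ k ^ (c + 5) := mono _ _ (by omega)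
      omega
    have hchst : chi A s ≠ chi A t := by
      intro he
      apply hu3
      have hiff := quot_rel hk hc flip (5 * j) s t
        (by rw [hs_u]; exact hu1) (by rw [hts]; exact hQu)
      rw [hs_u, hts] at hiff
      exact hiff.mp he
    have hkcs : k ^ c ≤ s := by
      have : u ≤ s := by rw [hsdef]; exact Nat.le_mul_of_pos_left u hppos
      omega
    have hkct : k ^ c ≤ t := by omega
    have cs := chi_le_one A s
    have ct := chi_le_one A t
    -- choose b
    have hcases : (t ∈ A ∧ s ∉ A) ∨ (t ∉ A ∧ s ∈ A) := by
      by_cases h1 : t ∈ A <;> by_cases h2 : s ∈ A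
      · exact absurd ((chi_eq_one_iff A s).2 h2 ▸ (chi_eq_one_iff A t).2 h1 ▸ rfl) hchst
      · exact Or.inl ⟨h1, h2⟩
      · exact Or.inr ⟨h1, h2⟩
      · exact absurd ((chi_eq_zero_iff A s).2 h2 ▸ (chi_eq_zero_iff A t).2 h1 ▸ rfl) hchst
    rcases hcases with ⟨hbt, hos⟩ | ⟨hot, hbs⟩
    · -- b = t, other = s
      refine ⟨t, hbt, ?_, ?_, ?_, ?_⟩
      · -- n - k * t ∈ A
        have hkt : k * t ≤ n := by
          have : t ≤ q := by omega
          calc k * t ≤ k * q := Nat.mul_le_mul_left _ this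
          _ ≤ n := hkqn
        have hadiv : (n - k * t) / k = q - t := by
          rw [hqdef]
          exact Nat.sub_mul_div n k t
        have hqt : q - t = s := by omega
        have hbig : k ^ c ≤ n - k * t := by
          have h9 : (n - k * t) / k ≤ n - k * t := Nat.div_le_self _ _
          rw [hadiv, hqt] at h9
          omega
        have hfl := flip (n - k * t) hbig
        rw [hadiv, hqt] at hfl
        have hz : chi A s = 0 := (chi_eq_zero_iff A s).2 hos
        have := chi_le_one A (n - k * t)
        exact (chi_eq_one_iff A (n - k * t)).1 (by omega)
      · have : t ≤ q := by omega
        calc k * t ≤ k * q := Nat.mul_le_mul_left _ this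
        _ ≤ n := hkqn
      · have hqt : q - t = s := by omega
        rw [hqt]
        have : min t s = s := min_eq_right (le_of_lt hstt)
        omega
      · have hqt : q - t = s := by omega
        rw [hqt]
        have : min t s = s := min_eq_right (le_of_lt hstt)
        omega
    · -- b = s, other = t
      refine ⟨s, hbs, ?_, ?_, ?_, ?_⟩
      · have hks : k * s ≤ n := by
          calc k * s ≤ k * q := Nat.mul_le_mul_left _ hsq
          _ ≤ n := hkqn
        have hadiv : (n - k * s) / k = q - s := by
          rw [hqdef]
          exact Nat.sub_mul_div n k s
        have hqs : q - s = t := htdef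
        have hbig : k ^ c ≤ n - k * s := by
          have h9 : (n - k * s) / k ≤ n - k * s := Nat.div_le_self _ _
          rw [hadiv, hqs] at h9
          omega
        have hfl := flip (n - k * s) hbig
        rw [hadiv, hqs] at hfl
        have hz : chi A t = 0 := (chi_eq_zero_iff A t).2 hot
        have := chi_le_one A (n - k * s)
        exact (chi_eq_one_iff A (n - k * s)).1 (by omega)
      · calc k * s ≤ k * q := Nat.mul_le_mul_left _ hsq
        _ ≤ n := hkqn
      · have hqs : q - s = t := htdef
        rw [hqs]
        have : min s t = s := min_eq_left (le_of_lt hstt)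
        omega
      · have hqs : q - s = t := htdef
        rw [hqs]
        have : min s t = s := min_eq_left (le_of_lt hstt)
        omega
  -- now build the injection
  have hfin : {p : ℕ × ℕ | p.1 ∈ A ∧ p.2 ∈ A ∧ p.1 + k * p.2 = n}.Finite := by
    apply Set.Finite.subset (Set.finite_Iic (n, n))
    rintro ⟨x, y⟩ ⟨-, -, hxy⟩
    have hxy' : x + k * y = n := hxy
    simp only [Set.mem_Iic, Prod.mk_le_mk]
    constructor
    · omega
    · have : y ≤ k * y := Nat.le_mul_of_pos_left y hk0
      omega
  choose f hf1 hf2 hf3 hf4 hf5 using hex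
  set g : ℕ → ℕ × ℕ := fun j => if hj : j < T then (n - k * f j hj, f j hj) else (0, 0)
    with hgdef
  have hginj : Set.InjOn g ↑(Finset.range T) := by
    intro j1 hj1 j2 hj2 hg
    simp only [Finset.coe_range, Set.mem_Iio] at hj1 hj2
    rw [hgdef] at hg
    simp only [dif_pos hj1, dif_pos hj2, Prod.mk.injEq] at hg
    have hb : f j1 hj1 = f j2 hj2 := hg.2
    by_contra hne
    have hmin : min (f j1 hj1) (q - f j1 hj1) = min (f j2 hj2) (q - f j2 hj2) := by
      rw [hb]
    rcases Nat.lt_or_ge j1 j2 with hlt | hge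
    · have e1 : k ^ (5 * j1 + c + 5) ≤ k ^ (5 * j2 + c) := mono _ _ (by omega)
      have := hf4 j2 hj2
      have := hf5 j1 hj1
      omega
    · have hlt : j2 < j1 := by omega
      have e1 : k ^ (5 * j2 + c + 5) ≤ k ^ (5 * j1 + c) := mono _ _ (by omega)
      have := hf4 j1 hj1
      have := hf5 j2 hj2
      omega
  have hgsub : g '' ↑(Finset.range T) ⊆ {p : ℕ × ℕ | p.1 ∈ A ∧ p.2 ∈ A ∧ p.1 + k * p.2 = n} := by
    rintro ⟨x, y⟩ ⟨j, hj, hgj⟩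
    simp only [Finset.coe_range, Set.mem_Iio] at hj
    rw [hgdef] at hgj
    simp only [dif_pos hj, Prod.mk.injEq] at hgj
    obtain ⟨h1, h2⟩ := hgj
    subst h1; subst h2
    refine ⟨hf2 j hj, hf1 j hj, ?_⟩
    show n - k * f j hj + k * f j hj = n
    have := hf3 j hj
    omega
  calc T = (↑(Finset.range T) : Set ℕ).ncard := by
        rw [Set.ncard_coe_finset, Finset.card_range]
  _ = (g '' ↑(Finset.range T)).ncard := (Set.ncard_image_of_injOn hginj).symm
  _ ≤ _ := Set.ncard_le_ncard hgsub hfin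
theorem stmt_4 (k n₀ : ℕ) (hk : 2 ≤ k) (A : Set ℕ)
    (h : ∀ n, n₀ ≤ n → R k A n = R k Aᶜ n) :
    ∃ c : ℝ, 0 < c ∧ ∃ N : ℕ, ∀ n : ℕ, N ≤ n → c * Real.log n ≤ R k A n := by
  have hk1 : 1 < k := by omega
  have hk0 : 0 < k := by omega
  set c : ℕ := Nat.log k (n₀ + k) + 1 with hcdef
  have hc1 : 1 ≤ c := by omega
  have hBc : n₀ + k < k ^ c := Nat.lt_pow_succ_log_self hk1 (n₀ + k)
  have flip : ∀ m, k ^ c ≤ m → chi A m + chi A (m / k) = 1 := by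
    intro m hm
    exact chi_flip k n₀ hk A h m (by omega)
  have hlogk : 0 < Real.log k := Real.log_pos (by exact_mod_cast hk1)
  refine ⟨1 / (20 * Real.log k), by positivity, k ^ (3 * c + 17), ?_⟩
  intro n hn
  set m := Nat.log k n with hmdef
  have hme : 3 * c + 17 ≤ m := by
    calc 3 * c + 17 = Nat.log k (k ^ (3 * c + 17)) := (Nat.log_pow hk1 (3 * c + 17)).symm
    _ ≤ m := Nat.log_mono_right hn
  set T := (m - (2 * c + 8)) / 5 with hTdef
  have hn0 : 0 < n := lt_of_lt_of_le (pow_pos hk0 (3 * c + 17)) hn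
  have hTn : k ^ (5 * T + 2 * c + 8) ≤ n := by
    have h1 : 5 * T + 2 * c + 8 ≤ m := by omega
    calc k ^ (5 * T + 2 * c + 8) ≤ k ^ m := Nat.pow_le_pow_right (by omega) h1
    _ ≤ n := Nat.pow_log_le_self k (by omega)
  have hR := main_count (A := A) hk hc1 flip T n hTn
  have hTm : m + 1 ≤ 20 * T := by omega
  have hlogn : Real.log n ≤ (m + 1 : ℕ) * Real.log k := by
    have h2 : (n : ℝ) ≤ (k : ℝ) ^ (m + 1) := by
      exact_mod_cast (Nat.lt_pow_succ_log_self hk1 n).le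
    have h3 : Real.log n ≤ Real.log ((k : ℝ) ^ (m + 1)) :=
      Real.log_le_log (by exact_mod_cast hn0) h2
    rw [Real.log_pow] at h3
    exact_mod_cast h3
  calc 1 / (20 * Real.log k) * Real.log n
      ≤ 1 / (20 * Real.log k) * ((m + 1 : ℕ) * Real.log k) :=
        mul_le_mul_of_nonneg_left hlogn (by positivity)
  _ = ((m : ℝ) + 1) / 20 := by
        field_simp
        push_cast
        ring
  _ ≤ (T : ℝ) := by
        rw [div_le_iff₀ (by norm_num)]
        have : ((m : ℝ) + 1) ≤ (20 * T : ℕ) := by exact_mod_cast hTm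
        push_cast at this ⊢
        linarith
  _ ≤ (R k A n : ℝ) := by exact_mod_cast hR
end

section
/- Let k ≥ 2 be an integer, A ⊆ ℕ, and suppose χ(n) + χ(⌊n/k⌋) = 1 for all n ≥ k + n₀. Set T = ⌊(n₀+k)/k⌋ + 1. Let j be an odd nonnegative integer, i ≥ 1, t an integer with T ≤ t ≤ kT − 1, and r an integer with 0 ≤ r ≤ k^{i+j} + kⁱ − k − 1. Then the number n = kⁱ(kʲ+1)t + r satisfies R_{1,k}(A,n) ≥ 1. -/
lemma Rpos_of_rep (k : ℕ) (hk : 1 ≤ k) (A : Set ℕ) (n a b : ℕ)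
    (ha : a ∈ A) (hb : b ∈ A) (hab : a + k * b = n) : 1 ≤ R k A n := by
  have hfin : {p : ℕ × ℕ | p.1 ∈ A ∧ p.2 ∈ A ∧ p.1 + k * p.2 = n}.Finite := by
    apply Set.Finite.subset ((Set.finite_Iic n).prod (Set.finite_Iic n))
    rintro ⟨x, y⟩ ⟨-, -, hxy⟩
    constructor
    · simp only [Set.mem_Iic]; omega
    · simp only [Set.mem_Iic]; nlinarith
  have hne : ((a, b) : ℕ × ℕ) ∈ {p : ℕ × ℕ | p.1 ∈ A ∧ p.2 ∈ A ∧ p.1 + k * p.2 = n} :=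
    ⟨ha, hb, hab⟩
  have := (Set.ncard_pos hfin).2 ⟨_, hne⟩
  unfold R
  omega

lemma block_lemma (k n₀ : ℕ) (hk : 2 ≤ k) (A : Set ℕ)
    (h : ∀ n, k + n₀ ≤ n → chi A n + chi A (n / k) = 1)
    (t : ℕ) (ht : k + n₀ < k * t) :
    ∀ m x, k ^ m * t ≤ x → x < k ^ m * t + k ^ m → (x ∈ A ↔ (Even m ↔ t ∈ A)) := by
  intro m
  induction m with
  | zero =>
    intro x h1 h2
    simp only [pow_zero, one_mul] at h1 h2
    have hx : x = t := by omega
    subst hx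
    simp
  | succ m ih =>
    intro x h1 h2
    have hkpow : k ≤ k ^ (m + 1) := by
      calc k = k ^ 1 := (pow_one k).symm
      _ ≤ k ^ (m + 1) := Nat.pow_le_pow_right (by omega) (by omega)
    have ht1 : 1 ≤ t := by nlinarith
    have hx : k + n₀ ≤ x := by
      have : k * t ≤ k ^ (m + 1) * t := Nat.mul_le_mul_right t hkpow
      omega
    have hpow : k ^ (m + 1) = k ^ m * k := pow_succ k m
    have hd1 : k ^ m * t ≤ x / k := by
      rw [Nat.le_div_iff_mul_le (by omega)]
      calc k ^ m * t * k = k ^ (m+1) * t := by rw [hpow]; ring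
        _ ≤ x := h1
    have hd2 : x / k < k ^ m * t + k ^ m := by
      rw [Nat.div_lt_iff_lt_mul (by omega : 0 < k)]
      calc x < k ^ (m+1) * t + k ^ (m+1) := h2
        _ = (k ^ m * t + k ^ m) * k := by rw [hpow]; ring
    have hchi := h x hx
    have hiff : x ∈ A ↔ x / k ∉ A := by
      unfold chi at hchi
      by_cases hxa : x ∈ A <;> by_cases hxk : x / k ∈ A <;> simp [hxa, hxk] at hchi ⊢
    rw [hiff, ih _ hd1 hd2, Nat.even_add_one]
    tauto

theorem stmt_9 (k n₀ : ℕ) (hk : 2 ≤ k) (A : Set ℕ)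
    (h : ∀ n, k + n₀ ≤ n → chi A n + chi A (n / k) = 1)
    (hR : ∀ n, n₀ ≤ n → R k A n = R k Aᶜ n)
    (T : ℕ) (hT : T = (n₀ + k) / k + 1)
    (i j t r : ℕ) (hj : Odd j) (hi : 1 ≤ i)
    (ht1 : T ≤ t) (ht2 : t ≤ k * T - 1)
    (hr : r ≤ k ^ (i + j) + k ^ i - k - 1) :
    1 ≤ R k A (k ^ i * (k ^ j + 1) * t + r) := by
  obtain ⟨c, hc⟩ := hj
  have hj1 : 1 ≤ j := by omega
  have hkT : k + n₀ < k * T := by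
    have hdm := Nat.div_add_mod (n₀ + k) k
    have hmod : (n₀ + k) % k < k := Nat.mod_lt _ (by omega)
    have hTk : k * T = k * ((n₀ + k) / k) + k := by rw [hT]; ring
    omega
  have hkt : k + n₀ < k * t := lt_of_lt_of_le hkT (Nat.mul_le_mul_left k ht1)
  have hblock := block_lemma k n₀ hk A h t hkt
  have hkK2 : k * k ^ (i + j - 1) = k ^ (i + j) := by
    rw [← pow_succ']
    congr 1
    omega
  have hK1k : k ≤ k ^ i := by
    calc k = k ^ 1 := (pow_one k).symm
      _ ≤ k ^ i := Nat.pow_le_pow_right (by omega) hi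
  have hK2pos : 1 ≤ k ^ (i + j - 1) := Nat.one_le_pow _ _ (by omega)
  have hKle : k ^ i ≤ k ^ (i + j) := Nat.pow_le_pow_right (by omega) (by omega)
  obtain ⟨q, s, hq, hs, hqs⟩ :
      ∃ q s, q < k ^ (i + j - 1) ∧ s < k ^ i ∧ s + k * q = r := by
    by_cases hcase : r < k ^ (i + j)
    · refine ⟨r / k, r % k, ?_, ?_, ?_⟩
      · rw [Nat.div_lt_iff_lt_mul (by omega : 0 < k)]
        calc r < k ^ (i + j) := hcase
          _ = k ^ (i + j - 1) * k := by rw [mul_comm]; exact hkK2.symm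
      · have := Nat.mod_lt r (show 0 < k by omega)
        omega
      · have := Nat.mod_add_div r k
        omega
    · refine ⟨k ^ (i + j - 1) - 1, r - (k ^ (i + j) - k), ?_, ?_, ?_⟩
      · omega
      · omega
      · have hmul : k * (k ^ (i + j - 1) - 1) = k ^ (i + j) - k := by
          rw [Nat.mul_sub, hkK2, mul_one]
        omega
  have hsum : k ^ i * (k ^ j + 1) * t = k ^ (i + j) * t + k ^ i * t := by
    rw [pow_add]; ring
  have hkb : k * (k ^ (i + j - 1) * t + q) = k ^ (i + j) * t + k * q := by
    rw [mul_add, ← mul_assoc, hkK2]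
  have hab : (k ^ i * t + s) + k * (k ^ (i + j - 1) * t + q)
      = k ^ i * (k ^ j + 1) * t + r := by
    omega
  have hmema := hblock i (k ^ i * t + s) (by omega) (by omega)
  have hmemb := hblock (i + j - 1) (k ^ (i + j - 1) * t + q) (by omega) (by omega)
  have hparity : Even (i + j - 1) ↔ Even i := by
    have hij : i + j - 1 = i + 2 * c := by omega
    rw [hij, Nat.even_add]
    simp
  rw [hparity] at hmemb
  by_cases hside : Even i ↔ t ∈ A
  · exact Rpos_of_rep k (by omega) A _ _ _ (hmema.2 hside) (hmemb.2 hside) hab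
  · have hn : n₀ ≤ k ^ i * (k ^ j + 1) * t + r := by
      have h3 : k * t ≤ k ^ i * t := Nat.mul_le_mul_right t hK1k
      omega
    rw [hR _ hn]
    exact Rpos_of_rep k (by omega) Aᶜ _ _ _
      (fun hc' => hside (hmema.1 hc')) (fun hc' => hside (hmemb.1 hc')) hab
end

section
/- Let k ≥ 2 be an integer and A ⊆ ℕ such that R_{1,k}(A,n) = R_{1,k}(ℕ\A,n) for all n ≥ n₀. Then R_{1,k}(A,n) → ∞ as n → ∞. -/
namespace StmtAux

open Finset

open Classical in
noncomputable def RF (k : ℕ) (A : Set ℕ) (n : ℕ) : Finset ℕ :=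
  (Finset.range (n / k + 1)).filter (fun b => (n - k * b) ∈ A ∧ b ∈ A)

open Classical in
noncomputable def DF (k N : ℕ) (A : Set ℕ) (M : ℕ) : Finset ℕ :=
  (Finset.range (M + 1)).filter (fun b => N ≤ b ∧ b + N ≤ M ∧ b ∈ A ∧ M - b ∉ A)

open Classical in
noncomputable def EF (k N : ℕ) (A : Set ℕ) (M : ℕ) : Finset ℕ :=
  (Finset.range (M + 1)).filter (fun b => N ≤ b ∧ b + N ≤ M ∧ b ∉ A ∧ M - b ∈ A)

def Sym (N : ℕ) (A : Set ℕ) (M : ℕ) : Prop :=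
  ∀ b, N ≤ b → b + N ≤ M → (b ∈ A ↔ M - b ∈ A)

lemma R_eq (k : ℕ) (hk : 0 < k) (A : Set ℕ) (n : ℕ) : R k A n = (RF k A n).card := by
  have hinj : Function.Injective (fun b : ℕ => (n - k * b, b)) := by
    intro a b hab
    exact congrArg Prod.snd hab
  have hset : {p : ℕ × ℕ | p.1 ∈ A ∧ p.2 ∈ A ∧ p.1 + k * p.2 = n}
      = ↑((RF k A n).image (fun b => (n - k * b, b))) := by
    ext ⟨x, y⟩
    simp only [Set.mem_setOf_eq, coe_image, Set.mem_image, mem_coe, RF, mem_filter, mem_range,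
      Prod.mk.injEq]
    constructor
    · rintro ⟨hx, hy, hsum⟩
      have hxy : x = n - k * y := Nat.eq_sub_of_add_eq hsum
      refine ⟨y, ⟨?_, ?_, hy⟩, hxy.symm, rfl⟩
      · have h1 : y * k ≤ n := by rw [mul_comm]; omega
        have := (Nat.le_div_iff_mul_le hk).2 h1
        omega
      · rw [← hxy]; exact hx
    · rintro ⟨b, ⟨hb1, hb2, hb3⟩, rfl, rfl⟩
      have hkb : k * b ≤ n := by
        have h4 : b * k ≤ n := (Nat.le_div_iff_mul_le hk).1 (by omega)
        rw [mul_comm] at h4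
        omega
      exact ⟨hb2, hb3, by omega⟩
  rw [R, hset, Set.ncard_coe_finset, card_image_of_injective _ hinj]

lemma R_sum (k : ℕ) (A : Set ℕ) (n : ℕ) :
    (RF k A n).card = ∑ b ∈ Finset.range (n / k + 1), chi A (n - k * b) * chi A b := by
  classical
  rw [RF, card_filter]
  apply Finset.sum_congr rfl
  intro b _
  by_cases h1 : (n - k * b) ∈ A <;> by_cases h2 : b ∈ A <;> simp [chi, h1, h2]

lemma chi_compl (A : Set ℕ) (t : ℕ) : chi Aᶜ t = 1 - chi A t := by
  by_cases h : t ∈ A <;> simp [chi, h]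

lemma S_eq (k : ℕ) (hk : 0 < k) (A : Set ℕ) (n : ℕ) (h : R k A n = R k Aᶜ n) :
    ∑ b ∈ Finset.range (n / k + 1), (chi A (n - k * b) + chi A b) = n / k + 1 := by
  have e1 := R_eq k hk A n
  have e2 := R_eq k hk Aᶜ n
  rw [R_sum] at e1 e2
  have point : ∀ b ∈ Finset.range (n / k + 1),
      chi A (n - k * b) * chi A b + 1
        = chi Aᶜ (n - k * b) * chi Aᶜ b + (chi A (n - k * b) + chi A b) := by
    intro b _
    by_cases h1 : (n - k * b) ∈ A <;> by_cases h2 : b ∈ A <;>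
      simp [chi, h1, h2]
  have sum_eq := Finset.sum_congr rfl point
  rw [Finset.sum_add_distrib, Finset.sum_add_distrib, Finset.sum_const, Finset.card_range,
    smul_eq_mul, mul_one] at sum_eq
  omega

lemma key_lemma (k n₀ : ℕ) (hk : 2 ≤ k) (A : Set ℕ)
    (h : ∀ n, n₀ ≤ n → R k A n = R k Aᶜ n) :
    ∀ m, n₀ + k ≤ m → (m ∈ A ↔ m / k ∉ A) := by
  intro m hm
  have hk0 : 0 < k := by omega
  set n := m - k with hn
  have hmn : m = n + k := by omega
  have s1 := S_eq k hk0 A n (h n (by omega))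
  have s2 := S_eq k hk0 A (n + k) (h (n + k) (by omega))
  have hdiv : (n + k) / k = n / k + 1 := Nat.add_div_right n hk0
  rw [hdiv] at s2
  have split1 : ∑ b ∈ Finset.range (n / k + 1 + 1), (chi A (n + k - k * b) + chi A b)
      = ∑ b ∈ Finset.range (n / k + 1 + 1), chi A (n + k - k * b)
        + ∑ b ∈ Finset.range (n / k + 1 + 1), chi A b := Finset.sum_add_distrib
  have split2 : ∑ b ∈ Finset.range (n / k + 1 + 1), chi A (n + k - k * b)
      = (∑ b ∈ Finset.range (n / k + 1), chi A (n - k * b)) + chi A (n + k) := by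
    rw [Finset.sum_range_succ', Nat.mul_zero, Nat.sub_zero]
    congr 1
    apply Finset.sum_congr rfl
    intro b _
    congr 1
    rw [Nat.mul_succ]
    exact Nat.add_sub_add_right n k (k * b)
  have split3 : ∑ b ∈ Finset.range (n / k + 1 + 1), chi A b
      = (∑ b ∈ Finset.range (n / k + 1), chi A b) + chi A (n / k + 1) :=
    Finset.sum_range_succ _ _
  have split4 : ∑ b ∈ Finset.range (n / k + 1), (chi A (n - k * b) + chi A b)
      = ∑ b ∈ Finset.range (n / k + 1), chi A (n - k * b)
        + ∑ b ∈ Finset.range (n / k + 1), chi A b := Finset.sum_add_distrib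
  rw [split1, split2, split3] at s2
  rw [split4] at s1
  have hchi : chi A (n + k) + chi A (n / k + 1) = 1 := by omega
  have hm2 : m / k = n / k + 1 := by
    rw [hmn, hdiv]
  rw [← hmn] at hchi
  rw [hm2]
  by_cases h1 : m ∈ A <;> by_cases h2 : (n / k + 1) ∈ A <;>
    simp [chi, h1, h2] at hchi ⊢ <;> omega

section Core

variable {k N : ℕ} {A : Set ℕ} (hk : 2 ≤ k) (hN : k ≤ N)
  (key : ∀ m, N ≤ m → (m ∈ A ↔ m / k ∉ A))

include hk hN key

lemma chain : ∀ (t m m' : ℕ), m / k ^ t = m' / k ^ t → N ≤ m / k ^ t → (m ∈ A ↔ m' ∈ A) := by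
  intro t
  induction t with
  | zero =>
    intro m m' h1 _
    simp only [pow_zero, Nat.div_one] at h1
    rw [h1]
  | succ t ih =>
    intro m m' h1 h2
    have hdd : ∀ x : ℕ, x / k ^ (t + 1) = x / k / k ^ t := by
      intro x
      rw [Nat.div_div_eq_div_mul, ← pow_succ']
    have hmN : N ≤ m := le_trans h2 (Nat.div_le_self _ _)
    have hmN' : N ≤ m' := le_trans (h1 ▸ h2) (Nat.div_le_self _ _)
    rw [key m hmN, key m' hmN']
    have := ih (m / k) (m' / k) (by rw [← hdd, ← hdd]; exact h1) (by rw [← hdd]; exact h2)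
    tauto

lemma flipk (x : ℕ) (hx : N ≤ x) : ¬(x ∈ A ↔ k * x ∈ A) := by
  have hkx : N ≤ k * x := le_trans hx (Nat.le_mul_of_pos_left x (by omega))
  have h1 := key (k * x) hkx
  have h2 : k * x / k = x := by
    rw [Nat.mul_div_cancel_left _ (by omega : 0 < k)]
  rw [h2] at h1
  tauto

lemma mem_DF (j i d s : ℕ) (hjN : N ≤ j) (hjA : j ∉ A) (hdN : N ≤ d) (hdA : d ∈ A)
    (hi : i < k) (hs : s < k) : k * j + i ∈ DF k N A (k * j + i + (k * d + s)) := by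
  classical
  have hk0 : 0 < k := by omega
  have hjj : j ≤ k * j := Nat.le_mul_of_pos_left j hk0
  have hdd : d ≤ k * d := Nat.le_mul_of_pos_left d hk0
  have hdiv1 : (k * j + i) / k = j := by
    rw [Nat.mul_add_div hk0, Nat.div_eq_of_lt hi, add_zero]
  have hdiv2 : (k * d + s) / k = d := by
    rw [Nat.mul_add_div hk0, Nat.div_eq_of_lt hs, add_zero]
  have hcA : k * j + i ∈ A := by
    have := key (k * j + i) (by omega)
    rw [hdiv1] at this
    exact this.mpr hjA
  have hMcA : k * d + s ∉ A := by
    have := key (k * d + s) (by omega)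
    rw [hdiv2] at this
    intro hmem
    exact (this.mp hmem) hdA
  simp only [DF, mem_filter, mem_range]
  refine ⟨by omega, by omega, by omega, hcA, ?_⟩
  have : k * j + i + (k * d + s) - (k * j + i) = k * d + s := by omega
  rw [this]
  exact hMcA

lemma EF_card (M : ℕ) : (EF k N A M).card = (DF k N A M).card := by
  classical
  apply Finset.card_bij (fun b _ => M - b)
  · intro a ha
    simp only [EF, mem_filter, mem_range] at ha
    simp only [DF, mem_filter, mem_range]
    have hrw : M - (M - a) = a := by omega
    rw [hrw]
    refine ⟨by omega, by omega, by omega, ha.2.2.2.2, ha.2.2.2.1⟩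
  · intro a ha b hb hab
    simp only [EF, mem_filter, mem_range] at ha hb
    omega
  · intro c hc
    simp only [DF, mem_filter, mem_range] at hc
    refine ⟨M - c, ?_, by omega⟩
    simp only [EF, mem_filter, mem_range]
    have hrw : M - (M - c) = c := by omega
    rw [hrw]
    refine ⟨by omega, by omega, by omega, hc.2.2.2.2, hc.2.2.2.1⟩

lemma DF_rec (M : ℕ) :
    k * min (DF k N A (M / k)).card (DF k N A (M / k - 1)).card ≤ (DF k N A M).card := by
  classical
  have hk0 : 0 < k := by omega
  set M' := M / k with hM'
  set r := M % k with hr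
  have hrk : r < k := Nat.mod_lt _ hk0
  have hMeq : k * M' + r = M := Nat.div_add_mod M k
  set f : ℕ × ℕ → ℕ := fun p => k * p.1 + p.2 with hf
  have hdivc : ∀ j i : ℕ, i < k → (k * j + i) / k = j := by
    intro j i hi
    rw [Nat.mul_add_div hk0, Nat.div_eq_of_lt hi, add_zero]
  have hmodc : ∀ j i : ℕ, i < k → (k * j + i) % k = i := by
    intro j i hi
    rw [Nat.mul_add_mod, Nat.mod_eq_of_lt hi]
  have hinj2 : ∀ j₁ i₁ j₂ i₂ : ℕ, i₁ < k → i₂ < k → k * j₁ + i₁ = k * j₂ + i₂ →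
      j₁ = j₂ ∧ i₁ = i₂ := by
    intro j₁ i₁ j₂ i₂ h1 h2 heq
    constructor
    · rw [← hdivc j₁ i₁ h1, ← hdivc j₂ i₂ h2, heq]
    · rw [← hmodc j₁ i₁ h1, ← hmodc j₂ i₂ h2, heq]
  set S1 := ((EF k N A M') ×ˢ (Finset.range (r + 1))).image f with hS1
  set S2 := ((EF k N A (M' - 1)) ×ˢ (Finset.Ico (r + 1) k)).image f with hS2
  have hc1 : S1.card = (EF k N A M').card * (r + 1) := by
    rw [hS1, Finset.card_image_of_injOn, card_product, card_range]
    intro p hp q hq heq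
    simp only [mem_coe, mem_product, mem_range] at hp hq
    have := hinj2 p.1 p.2 q.1 q.2 (by omega) (by omega) heq
    exact Prod.ext this.1 this.2
  have hc2 : S2.card = (EF k N A (M' - 1)).card * (k - 1 - r) := by
    rw [hS2, Finset.card_image_of_injOn, card_product, Nat.card_Ico]
    · congr 1
      omega
    · intro p hp q hq heq
      simp only [mem_coe, mem_product, mem_Ico] at hp hq
      have := hinj2 p.1 p.2 q.1 q.2 (by omega) (by omega) heq
      exact Prod.ext this.1 this.2
  have hsub1 : S1 ⊆ DF k N A M := by
    intro c hc
    simp only [hS1, mem_image, mem_product, mem_range] at hc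
    obtain ⟨⟨j, i⟩, ⟨hjE, hir⟩, rfl⟩ := hc
    simp only [EF, mem_filter, mem_range] at hjE
    obtain ⟨_, hjN, hjM, hjA, hjA2⟩ := hjE
    obtain ⟨d, hd⟩ : ∃ d, M' = j + d := ⟨M' - j, by omega⟩
    have hkM : k * M' = k * j + k * d := by rw [hd, mul_add]
    have hdA : d ∈ A := by rwa [show M' - j = d by omega] at hjA2
    have hmem := mem_DF hk hN key j i d (r - i) hjN hjA (by omega) hdA (by omega) (by omega)
    rwa [show k * j + i + (k * d + (r - i)) = M by omega] at hmem
  have hsub2 : S2 ⊆ DF k N A M := by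
    intro c hc
    simp only [hS2, mem_image, mem_product, mem_Ico] at hc
    obtain ⟨⟨j, i⟩, ⟨hjE, hir⟩, rfl⟩ := hc
    simp only [EF, mem_filter, mem_range] at hjE
    obtain ⟨_, hjN, hjM, hjA, hjA2⟩ := hjE
    obtain ⟨d, hd⟩ : ∃ d, M' - 1 = j + d := ⟨M' - 1 - j, by omega⟩
    have hM'1 : M' = j + d + 1 := by omega
    have hkM : k * M' = k * j + k * d + k := by rw [hM'1, mul_add, mul_add, mul_one]
    have hdA : d ∈ A := by rwa [show M' - 1 - j = d by omega] at hjA2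
    have hmem := mem_DF hk hN key j i d (k + r - i) hjN hjA (by omega) hdA (by omega) (by omega)
    rwa [show k * j + i + (k * d + (k + r - i)) = M by omega] at hmem
  have hdisj : Disjoint S1 S2 := by
    rw [Finset.disjoint_left]
    intro c hcs1 hcs2
    simp only [hS1, mem_image, mem_product, mem_range] at hcs1
    simp only [hS2, mem_image, mem_product, mem_Ico] at hcs2
    obtain ⟨⟨j1, i1⟩, ⟨_, hi1⟩, heq1⟩ := hcs1
    obtain ⟨⟨j2, i2⟩, ⟨_, hi2⟩, heq2⟩ := hcs2
    have m1 : c % k = i1 := by rw [← heq1]; exact hmodc j1 i1 (by omega)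
    have m2 : c % k = i2 := by rw [← heq2]; exact hmodc j2 i2 (by omega)
    omega
  have hunion : S1.card + S2.card ≤ (DF k N A M).card := by
    rw [← Finset.card_union_of_disjoint hdisj]
    exact Finset.card_le_card (Finset.union_subset hsub1 hsub2)
  have hE1 := EF_card hk hN key M'
  have hE2 := EF_card hk hN key (M' - 1)
  set m := min (DF k N A M').card (DF k N A (M' - 1)).card with hm
  have h1 : m * (r + 1) ≤ S1.card := by
    rw [hc1, hE1]
    exact Nat.mul_le_mul_right _ (min_le_left _ _)
  have h2 : m * (k - 1 - r) ≤ S2.card := by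
    rw [hc2, hE2]
    exact Nat.mul_le_mul_right _ (min_le_right _ _)
  have hsplit : k * m = m * (r + 1) + m * (k - 1 - r) := by
    rw [← Nat.mul_add, Nat.mul_comm]
    congr 1
    omega
  omega

lemma sym_of_zero (M : ℕ) (h0 : (DF k N A M).card = 0) : Sym N A M := by
  classical
  have hDF : ∀ b', N ≤ b' → b' + N ≤ M → b' ∈ A → M - b' ∈ A := by
    intro b' h1 h2 h3
    by_contra hna
    have hmem : b' ∈ DF k N A M := by
      simp only [DF, mem_filter, mem_range]
      exact ⟨by omega, h1, h2, h3, hna⟩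
    exact Finset.card_ne_zero_of_mem hmem h0
  intro b hb1 hb2
  constructor
  · exact hDF b hb1 hb2
  · intro hMb
    have := hDF (M - b) (by omega) (by omega) hMb
    rwa [show M - (M - b) = b by omega] at this

lemma sym_div (M : ℕ) (hsym : Sym N A M) : Sym N A (M / k) := by
  have hk0 : 0 < k := by omega
  set M' := M / k with hM'
  set r := M % k with hr
  have hrk : r < k := Nat.mod_lt _ hk0
  have hMeq : k * M' + r = M := Nat.div_add_mod M k
  intro b hb1 hb2
  obtain ⟨d, hd⟩ : ∃ d, M' = b + d := ⟨M' - b, by omega⟩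
  have hkM : k * M' = k * b + k * d := by rw [hd, mul_add]
  have hbb : b ≤ k * b := Nat.le_mul_of_pos_left b hk0
  have hdd : d ≤ k * d := Nat.le_mul_of_pos_left d hk0
  have hb3 := hsym (k * b) (by omega) (by omega)
  have hMkb : M - k * b = k * d + r := by omega
  have e1 : (k * b ∈ A) ↔ b ∉ A := by
    have := key (k * b) (by omega)
    rwa [Nat.mul_div_cancel_left _ hk0] at this
  have e2 : (k * d + r ∈ A) ↔ d ∉ A := by
    have := key (k * d + r) (by omega)
    rwa [Nat.mul_add_div hk0, Nat.div_eq_of_lt hrk, add_zero] at this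
  rw [hMkb, e2] at hb3
  rw [e1] at hb3
  rw [show M' - b = d by omega]
  tauto

lemma symB (M : ℕ) (hr : M % k + 2 ≤ k) (hM : k * (k * N + N + 1) ≤ M) (hs : Sym N A M) :
    False := by
  have hk0 : 0 < k := by omega
  set M' := M / k with hM'
  set r := M % k with hrdef
  have hrk : r < k := Nat.mod_lt _ hk0
  have hMeq : k * M' + r = M := Nat.div_add_mod M k
  have hM'ge : k * N + N + 1 ≤ M' := by
    rw [hM', Nat.le_div_iff_mul_le hk0, mul_comm]
    exact hM
  have rel1 := sym_div hk hN key M hs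
  have rel2 : ∀ j, N ≤ j → j + N + 1 ≤ M' → (j ∈ A ↔ M' - 1 - j ∈ A) := by
    intro j h1 h2
    obtain ⟨d, hd⟩ : ∃ d, M' = j + d + 1 := ⟨M' - 1 - j, by omega⟩
    have hkM : k * M' = k * j + k * d + k := by rw [hd, mul_add, mul_add, mul_one]
    have hjj : j ≤ k * j := Nat.le_mul_of_pos_left j hk0
    have hdd : d ≤ k * d := Nat.le_mul_of_pos_left d hk0
    have hdN : N ≤ d := by omega
    have hb3 := hs (k * j + (r + 1)) (by omega) (by omega)
    have hMkb : M - (k * j + (r + 1)) = k * d + (k - 1) := by omega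
    have e1 : (k * j + (r + 1) ∈ A) ↔ j ∉ A := by
      have := key (k * j + (r + 1)) (by omega)
      rwa [Nat.mul_add_div hk0, Nat.div_eq_of_lt (by omega : r + 1 < k), add_zero] at this
    have e2 : (k * d + (k - 1) ∈ A) ↔ d ∉ A := by
      have := key (k * d + (k - 1)) (by omega)
      rwa [Nat.mul_add_div hk0, Nat.div_eq_of_lt (by omega : k - 1 < k), add_zero] at this
    rw [hMkb, e2] at hb3
    rw [e1] at hb3
    rw [show M' - 1 - j = d by omega]
    tauto
  have step : ∀ y, N ≤ y → y + N + 1 ≤ M' → ((y ∈ A) ↔ (y + 1 ∈ A)) := by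
    intro y h1 h2
    have hj1 : N ≤ M' - 1 - y := by omega
    have r2 := rel2 (M' - 1 - y) hj1 (by omega)
    have r1 := rel1 (M' - 1 - y) hj1 (by omega)
    rw [show M' - 1 - (M' - 1 - y) = y by omega] at r2
    rw [show M' - (M' - 1 - y) = y + 1 by omega] at r1
    tauto
  have const : ∀ d : ℕ, N + d + N + 1 ≤ M' → ((N ∈ A) ↔ (N + d ∈ A)) := by
    intro d
    induction d with
    | zero => intro _; simp
    | succ d ih =>
      intro hd
      have h1 := ih (by omega)
      have h2 := step (N + d) (by omega) (by omega)
      rw [show N + (d + 1) = N + d + 1 by omega]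
      tauto
  have hNN : N ≤ k * N := Nat.le_mul_of_pos_left N hk0
  have hconst := const (k * N - N) (by omega)
  rw [show N + (k * N - N) = k * N by omega] at hconst
  exact flipk hk hN key N le_rfl hconst

lemma symB_old (M : ℕ) (hr : M % k + 2 ≤ k) (hM : k * (k * N + N + 1) ≤ M) (hs : Sym N A M) :
    False := by
  exact symB hk hN key M hr hM hs

lemma desc : ∀ M : ℕ, Sym N A M → k * (k * N + N + 1) ≤ M →
    ∃ e Q : ℕ, M + 1 = k ^ e * Q ∧ 1 ≤ Q ∧ Q ≤ k * (k * N + N + 1) := by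
  intro M
  induction M using Nat.strong_induction_on with
  | _ M ih =>
    intro hsym hM
    have hk0 : 0 < k := by omega
    by_cases hr : M % k + 2 ≤ k
    · exact (symB hk hN key M hr hM hsym).elim
    · have hrk' : M % k < k := Nat.mod_lt _ hk0
      obtain ⟨M', hM'def⟩ : ∃ M', M' = M / k := ⟨_, rfl⟩
      have hMeq : k * M' + (k - 1) = M := by
        have h := Nat.div_add_mod M k
        rw [← hM'def] at h
        omega
      have hMsucc : M + 1 = k * (M' + 1) := by
        rw [mul_add, mul_one]
        omega
      have hsym' : Sym N A M' := by
        rw [hM'def]; exact sym_div hk hN key M hsym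
      by_cases hM'big : k * (k * N + N + 1) ≤ M'
      · have hM'lt : M' < M := by
          rw [hM'def]; exact Nat.div_lt_self (by omega) (by omega)
        obtain ⟨e, Q, h1, h2, h3⟩ := ih M' hM'lt hsym' hM'big
        refine ⟨e + 1, Q, ?_, h2, h3⟩
        rw [hMsucc, h1, pow_succ, mul_comm (k ^ e) k, mul_assoc]
      · push_neg at hM'big
        refine ⟨1, M' + 1, by rw [hMsucc, pow_one], by omega, by omega⟩

lemma bottom : ∃ T₀ : ℕ, ∀ M, T₀ ≤ M → 1 ≤ (DF k N A M).card := by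
  have hk0 : 0 < k := by omega
  have hN2 : 2 ≤ N := by omega
  have hT₁pos : 1 ≤ k * (k * N + N + 1) := by
    calc 1 = 1 * 1 := by ring
    _ ≤ k * (k * N + N + 1) := Nat.mul_le_mul (by omega) (by omega)
  have htpow : k * N < k ^ (k * N) := by
    calc k * N < 2 ^ (k * N) := Nat.lt_two_pow_self
    _ ≤ k ^ (k * N) := Nat.pow_le_pow_left (by omega) _
  have hkN2 : N + 1 ≤ k ^ N := by
    calc N + 1 ≤ 2 ^ N := Nat.lt_two_pow_self
    _ ≤ k ^ N := Nat.pow_le_pow_left (by omega) _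
  have hNleKN : N ≤ k * N := Nat.le_mul_of_pos_left N hk0
  refine ⟨k ^ (k * N + N) * (k * (k * N + N + 1)), fun M hM => ?_⟩
  by_contra h0
  have h0' : (DF k N A M).card = 0 := by omega
  have hsym := sym_of_zero hk hN key M h0'
  have hpow1 : 1 ≤ k ^ (k * N + N) := Nat.one_le_pow _ _ hk0
  have hMT₁ : k * (k * N + N + 1) ≤ M := by
    calc k * (k * N + N + 1) = 1 * (k * (k * N + N + 1)) := by ring
    _ ≤ k ^ (k * N + N) * (k * (k * N + N + 1)) := Nat.mul_le_mul_right _ hpow1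
    _ ≤ M := hM
  obtain ⟨e, Q, hQ1, hQ2, hQ3⟩ := desc hk hN key M hsym hMT₁
  have hke : k * N + N < e := by
    by_contra hle
    push_neg at hle
    have hp : k ^ e ≤ k ^ (k * N + N) := Nat.pow_le_pow_right (by omega) hle
    have h1 : k ^ e * Q ≤ k ^ (k * N + N) * Q := Nat.mul_le_mul_right _ hp
    have h2 : k ^ (k * N + N) * Q ≤ k ^ (k * N + N) * (k * (k * N + N + 1)) :=
      Nat.mul_le_mul_left _ hQ3
    omega
  set P := k ^ (e - k * N) * Q with hP
  have hPbig : N + 1 ≤ P := by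
    have h1 : k ^ N ≤ k ^ (e - k * N) := Nat.pow_le_pow_right (by omega) (by omega)
    calc N + 1 ≤ k ^ N := hkN2
    _ = k ^ N * 1 := by ring
    _ ≤ k ^ (e - k * N) * Q := Nat.mul_le_mul h1 hQ2
  have hsplit : k ^ (k * N) * P = k ^ e * Q := by
    rw [hP, ← mul_assoc, ← pow_add]
    congr 2
    omega
  have habs : ∀ x, x < k ^ (k * N) → (M - x) / k ^ (k * N) = P - 1 := by
    intro x hx
    have hexp : (P - 1) * k ^ (k * N) = P * k ^ (k * N) - k ^ (k * N) := by
      rw [Nat.sub_mul, one_mul]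
    have hPk : P * k ^ (k * N) = k ^ e * Q := by rw [mul_comm]; exact hsplit
    have hexp2 : (P - 1 + 1) * k ^ (k * N) = P * k ^ (k * N) := by
      congr 1
      omega
    apply Nat.div_eq_of_lt_le <;> omega
  have hNkt : N < k ^ (k * N) := by omega
  have hMbig : k * N + N + 1 ≤ M := by
    have hps : k ^ (k * N + N) = k ^ (k * N) * k ^ N := pow_add k _ _
    have h2 : k ^ (k * N) * 2 ≤ k ^ (k * N) * k ^ N := Nat.mul_le_mul_left _ (by omega)
    have h3 : k ^ (k * N + N) * 1 ≤ k ^ (k * N + N) * (k * (k * N + N + 1)) :=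
      Nat.mul_le_mul_left _ hT₁pos
    omega
  have hchain := chain hk hN key (k * N) (M - N) (M - k * N)
    (by rw [habs N hNkt, habs (k * N) htpow]) (by rw [habs N hNkt]; omega)
  have hs1 := hsym N le_rfl (by omega)
  have hs2 := hsym (k * N) (by omega) (by omega)
  have hflip := flipk hk hN key N le_rfl
  tauto

lemma grow : ∀ c : ℕ, ∃ T : ℕ, ∀ M, T ≤ M → c ≤ (DF k N A M).card := by
  have hk0 : 0 < k := by omega
  obtain ⟨T0, hT0⟩ := bottom hk hN key
  intro c
  induction c with
  | zero => exact ⟨0, fun M _ => Nat.zero_le _⟩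
  | succ c ih =>
    obtain ⟨T, hT⟩ := ih
    refine ⟨k * (max T T0 + 2), fun M hM => ?_⟩
    have h1 : max T T0 + 2 ≤ M / k := by
      rw [Nat.le_div_iff_mul_le hk0, mul_comm]
      exact hM
    have ha1 : c ≤ (DF k N A (M / k)).card := hT _ (by omega)
    have ha2 : c ≤ (DF k N A (M / k - 1)).card := hT _ (by omega)
    have hb1 : 1 ≤ (DF k N A (M / k)).card := hT0 _ (by omega)
    have hb2 : 1 ≤ (DF k N A (M / k - 1)).card := hT0 _ (by omega)
    have hrec := DF_rec hk hN key M
    set m := min (DF k N A (M / k)).card (DF k N A (M / k - 1)).card with hm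
    have hmc : c ≤ m ∧ 1 ≤ m := by
      constructor <;> simp only [hm, le_min_iff] <;> omega
    have h2m : 2 * m ≤ k * m := Nat.mul_le_mul_right _ hk
    omega

lemma R_ge (n : ℕ) : (DF k N A (n / k)).card ≤ R k A n := by
  classical
  have hk0 : 0 < k := by omega
  rw [R_eq k hk0 A n]
  apply Finset.card_le_card
  intro b hb
  simp only [DF, mem_filter, mem_range] at hb
  obtain ⟨hb0, hb1, hb2, hb3, hb4⟩ := hb
  set M := n / k with hM
  have hMeq : k * M + n % k = n := Nat.div_add_mod n k
  have hrk : n % k < k := Nat.mod_lt _ hk0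
  obtain ⟨d, hd⟩ : ∃ d, M = b + d := ⟨M - b, by omega⟩
  have hkM : k * M = k * b + k * d := by rw [hd, mul_add]
  have hdN : N ≤ d := by omega
  have hdd : d ≤ k * d := Nat.le_mul_of_pos_left d hk0
  have hnb : n - k * b = k * d + n % k := by omega
  have hdiv : (k * d + n % k) / k = d := by
    rw [Nat.mul_add_div hk0, Nat.div_eq_of_lt hrk, add_zero]
  have hnbA : (n - k * b) ∈ A := by
    rw [hnb]
    have := key (k * d + n % k) (by omega)
    rw [hdiv] at this
    apply this.mpr
    rwa [show d = M - b by omega]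
  simp only [RF, mem_filter, mem_range]
  exact ⟨by omega, hnbA, hb3⟩

end Core

end StmtAux

theorem stmt_10 (k n₀ : ℕ) (hk : 2 ≤ k) (A : Set ℕ)
    (h : ∀ n, n₀ ≤ n → R k A n = R k Aᶜ n) :
    Filter.Tendsto (fun n => R k A n) Filter.atTop Filter.atTop := by
  have key := StmtAux.key_lemma k n₀ hk A h
  have hN : k ≤ n₀ + k := by omega
  rw [Filter.tendsto_atTop]
  intro c
  obtain ⟨T, hT⟩ := StmtAux.grow hk hN key c
  rw [Filter.eventually_atTop]
  refine ⟨k * (T + 1), fun n hn => ?_⟩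
  have h1 : T ≤ n / k := by
    have : (T + 1) * k ≤ n := by nlinarith
    have := (Nat.le_div_iff_mul_le (by omega : 0 < k)).2 this
    omega
  exact le_trans (hT _ h1) (StmtAux.R_ge hk hN key n)
end
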